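/- Let H be a separable Hilbert space, let Φ₁ = (φ_{1,i})_{i∈I₁} and Φ₂ = (φ_{2,i})_{i∈I₂} be Parseval frames in H, let S₁ ⊆ I₁, S₂ ⊆ I₂, δ ≥ 0, ε ≥ 0, and suppose κ := κ(S₁,S₂) < 1/2. Suppose S̃ = S₁⁰ + S₂⁰ + n where ‖Φ₁ᵀS₁⁰‖₁ + ‖Φ₂ᵀS₂⁰‖₁ < ∞, ‖1_{S₁ᶜ}Φ₁ᵀS₁⁰‖₁ + ‖1_{S₂ᶜ}Φ₂ᵀS₂⁰‖₁ ≤ δ, and the noise term n ∈ H satisfies ‖Φ₁ᵀn‖₁ ≤ ε or ‖Φ₂ᵀn‖₁ ≤ ε. Let (S̃₁⋆, S̃₂⋆) be a minimizer of ‖Φ₁ᵀT₁‖₁ + ‖Φ₂ᵀT₂‖₁ over all pairs with T₁ + T₂ = S̃. Then ‖S̃₁⋆ − S₁⁰‖ + ‖S̃₂⋆ − S₂⁰‖ ≤ (2δ + 5ε)/(1 − 2κ). -/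

import Mathlib

open scoped ENNReal NNReal

noncomputable section

variable {H : Type*} [NormedAddCommGroup H] [InnerProductSpace ℂ H]

/-- A countable family is a Parseval frame if it satisfies the Parseval identity. -/
def IsParsevalFrame {I : Type*} (Φ : I → H) : Prop :=
  ∀ f : H, ∑' i, ‖(inner ℂ (Φ i) f : ℂ)‖ ^ 2 = ‖f‖ ^ 2

/-- `ℓ¹` norm (in `[0,∞]`) of the analysis coefficients of `f` in the frame `Φ`. -/
def analysisL1 {I : Type*} (Φ : I → H) (f : H) : ℝ≥0∞ :=
  ∑' i, (‖(inner ℂ (Φ i) f : ℂ)‖₊ : ℝ≥0∞)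

/-- `ℓ¹` norm of the analysis coefficients restricted to the index set `S`. -/
def analysisL1On {I : Type*} (Φ : I → H) (S : Set I) (f : H) : ℝ≥0∞ :=
  ∑' i : S, (‖(inner ℂ (Φ (i : I)) f : ℂ)‖₊ : ℝ≥0∞)

/-- The joint concentration `κ(S₁, S₂)` of two frames on index sets `S₁`, `S₂`. -/
def jointConcentration {I₁ I₂ : Type*} (Φ₁ : I₁ → H) (Φ₂ : I₂ → H)
    (S₁ : Set I₁) (S₂ : Set I₂) : ℝ≥0∞ :=
  ⨆ f : {f : H // 0 < analysisL1 Φ₁ f + analysisL1 Φ₂ f ∧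
      analysisL1 Φ₁ f + analysisL1 Φ₂ f < ⊤},
    (analysisL1On Φ₁ S₁ (f : H) + analysisL1On Φ₂ S₂ (f : H)) /
      (analysisL1 Φ₁ (f : H) + analysisL1 Φ₂ (f : H))


/-!
Put `h₁ = S₁⋆ - S₁⁰` and `h₂ = S₂⋆ - S₂⁰`, so that `h₁ + h₂ = n`, and let
`L = ‖Φ₁ᵀh₁‖₁ + ‖Φ₂ᵀh₂‖₁`. Say the noise is small in `Φ₁` (the other case is symmetric).
Comparing the minimizer with the competitor `(S₁⁰ + n, S₂⁰)` yields the cone condition: the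
coefficient mass of `(h₁, h₂)` off `(S₁, S₂)` is at most its mass on `(S₁, S₂)` plus `2δ + ε`.
The mass on `(S₁, S₂)` is at most `κ L + 2ε`, by joint concentration of the single vector
`h₁ - n = -h₂`. Hence `L ≤ 2κL + 2δ + 5ε`, and Parseval gives `‖h₁‖ + ‖h₂‖ ≤ L`.
-/

section AnalysisL1

variable {I : Type*} (Φ : I → H)

theorem analysisL1On_univ (f : H) : analysisL1On Φ Set.univ f = analysisL1 Φ f :=
  tsum_univ fun i => (‖(inner ℂ (Φ i) f : ℂ)‖₊ : ℝ≥0∞)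

theorem analysisL1On_neg (S : Set I) (f : H) : analysisL1On Φ S (-f) = analysisL1On Φ S f := by
  simp only [analysisL1On, inner_neg_right, nnnorm_neg]

theorem analysisL1On_add_le (S : Set I) (f g : H) :
    analysisL1On Φ S (f + g) ≤ analysisL1On Φ S f + analysisL1On Φ S g := by
  rw [analysisL1On, analysisL1On, analysisL1On, ← ENNReal.tsum_add]
  refine ENNReal.tsum_le_tsum fun i => ?_
  rw [inner_add_right]
  exact_mod_cast nnnorm_add_le _ _

theorem analysisL1On_sub_le (S : Set I) (f g : H) :
    analysisL1On Φ S (f - g) ≤ analysisL1On Φ S f + analysisL1On Φ S g := by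
  simpa only [sub_eq_add_neg, analysisL1On_neg] using analysisL1On_add_le Φ S f (-g)

theorem analysisL1On_add_compl (S : Set I) (f : H) :
    analysisL1On Φ S f + analysisL1On Φ Sᶜ f = analysisL1 Φ f :=
  ENNReal.summable.tsum_add_tsum_compl (f := fun i => (‖(inner ℂ (Φ i) f : ℂ)‖₊ : ℝ≥0∞))
    ENNReal.summable

theorem analysisL1On_le (S : Set I) (f : H) : analysisL1On Φ S f ≤ analysisL1 Φ f :=
  analysisL1On_add_compl Φ S f ▸ le_self_add

theorem analysisL1_neg (f : H) : analysisL1 Φ (-f) = analysisL1 Φ f := by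
  simpa only [analysisL1On_univ] using analysisL1On_neg Φ Set.univ f

theorem analysisL1_add_le (f g : H) :
    analysisL1 Φ (f + g) ≤ analysisL1 Φ f + analysisL1 Φ g := by
  simpa only [analysisL1On_univ] using analysisL1On_add_le Φ Set.univ f g

theorem analysisL1_sub_le (f g : H) :
    analysisL1 Φ (f - g) ≤ analysisL1 Φ f + analysisL1 Φ g := by
  simpa only [analysisL1On_univ] using analysisL1On_sub_le Φ Set.univ f g

/-- By Parseval, `‖f‖` is the `ℓ²` norm of the coefficients, which is at most their `ℓ¹` norm. -/
theorem IsParsevalFrame.ofReal_norm_le_analysisL1 {Φ : I → H} (hΦ : IsParsevalFrame Φ) (f : H) :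
    ENNReal.ofReal ‖f‖ ≤ analysisL1 Φ f := by
  set c : I → ℝ≥0∞ := fun i => ‖(inner ℂ (Φ i) f : ℂ)‖₊
  have hsq : ENNReal.ofReal (‖f‖ ^ 2) ≤ ∑' i, c i ^ 2 := by
    rw [← hΦ f]
    by_cases hs : Summable fun i => ‖(inner ℂ (Φ i) f : ℂ)‖ ^ 2
    · rw [ENNReal.ofReal_tsum_of_nonneg (fun _ => by positivity) hs]
      refine (tsum_congr fun i => ?_).le
      rw [ENNReal.ofReal_pow (norm_nonneg _), ofReal_norm, enorm_eq_nnnorm]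
    · simp [tsum_eq_zero_of_not_summable hs]
  have hsq_le : ∑' i, c i ^ 2 ≤ analysisL1 Φ f ^ 2 := calc
    ∑' i, c i ^ 2 ≤ ∑' i, c i * ∑' j, c j :=
      ENNReal.tsum_le_tsum fun i => (sq (c i)).trans_le (mul_le_mul_right (ENNReal.le_tsum i) _)
    _ = analysisL1 Φ f ^ 2 := by rw [ENNReal.tsum_mul_right, sq]; rfl
  rw [← ENNReal.pow_le_pow_left_iff two_ne_zero, ← ENNReal.ofReal_pow (norm_nonneg f)]
  exact hsq.trans hsq_le

end AnalysisL1

section JointConcentration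

variable {I₁ I₂ : Type*} (Φ₁ : I₁ → H) (Φ₂ : I₂ → H) (S₁ : Set I₁) (S₂ : Set I₂)

theorem jointConcentration_comm :
    jointConcentration Φ₁ Φ₂ S₁ S₂ = jointConcentration Φ₂ Φ₁ S₂ S₁ :=
  (Equiv.subtypeEquivRight fun _ => by rw [add_comm]).iSup_congr fun _ => by
    simp only [Equiv.subtypeEquivRight_apply_coe, add_comm]

theorem analysisL1On_add_le_analysisL1_add (f₁ f₂ : H) :
    analysisL1On Φ₁ S₁ f₁ + analysisL1On Φ₂ S₂ f₂ ≤ analysisL1 Φ₁ f₁ + analysisL1 Φ₂ f₂ :=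
  add_le_add (analysisL1On_le Φ₁ S₁ f₁) (analysisL1On_le Φ₂ S₂ f₂)

theorem jointConcentration_le_one : jointConcentration Φ₁ Φ₂ S₁ S₂ ≤ 1 :=
  iSup_le fun f => ENNReal.div_le_of_le_mul <| by
    simpa only [one_mul] using analysisL1On_add_le_analysisL1_add Φ₁ Φ₂ S₁ S₂ f f

theorem analysisL1On_add_le_jointConcentration_mul {f : H}
    (hf : analysisL1 Φ₁ f + analysisL1 Φ₂ f ≠ ⊤) :
    analysisL1On Φ₁ S₁ f + analysisL1On Φ₂ S₂ f ≤
      jointConcentration Φ₁ Φ₂ S₁ S₂ * (analysisL1 Φ₁ f + analysisL1 Φ₂ f) := by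
  rcases eq_or_ne (analysisL1 Φ₁ f + analysisL1 Φ₂ f) 0 with h0 | h0
  · rw [h0, mul_zero, ← h0]
    exact analysisL1On_add_le_analysisL1_add Φ₁ Φ₂ S₁ S₂ f f
  · rw [← ENNReal.div_le_iff h0 hf]
    exact le_iSup_of_le (⟨f, pos_iff_ne_zero.2 h0, hf.lt_top⟩ :
      {f : H // 0 < analysisL1 Φ₁ f + analysisL1 Φ₂ f ∧
        analysisL1 Φ₁ f + analysisL1 Φ₂ f < ⊤}) le_rfl

end JointConcentration

/-- The cone condition of `ℓ¹` minimization, with `p` and `q` the coefficient mass on and off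
the support. -/
theorem add_le_two_mul_add_of_le_add {G : Type*} [AddCommGroup G] {p q : G → ℝ≥0∞}
    (hp : ∀ x y, p (x - y) ≤ p x + p y) (hq : ∀ x y, q (x - y) ≤ q x + q y) {f g : G}
    {η : ℝ≥0∞} (hg : p g ≠ ⊤) (hfg : p f + q f ≤ p g + q g + η) :
    p (f - g) + q (f - g) ≤ 2 * p (f - g) + 2 * q g + η := by
  have hpg : p g ≤ p f + p (f - g) := by simpa only [sub_sub_cancel] using hp f (f - g)
  have hcone : q (f - g) ≤ p (f - g) + 2 * q g + η := by
    refine (ENNReal.add_le_add_iff_right hg).1 ?_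
    calc q (f - g) + p g ≤ (q f + q g) + (p f + p (f - g)) := add_le_add (hq f g) hpg
      _ = (p f + q f) + q g + p (f - g) := by ring
      _ ≤ (p g + q g + η) + q g + p (f - g) := by gcongr
      _ = p (f - g) + 2 * q g + η + p g := by ring
  calc p (f - g) + q (f - g) ≤ p (f - g) + (p (f - g) + 2 * q g + η) := by gcongr
    _ = 2 * p (f - g) + 2 * q g + η := by ring

section Separation

variable {I₁ I₂ : Type*} (Φ₁ : I₁ → H) (Φ₂ : I₂ → H) (S₁ : Set I₁) (S₂ : Set I₂)

theorem analysisL1_sub_add_le_of_le_add {f₁ f₂ g₁ g₂ : H} {η : ℝ≥0∞}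
    (hg : analysisL1On Φ₁ S₁ g₁ + analysisL1On Φ₂ S₂ g₂ ≠ ⊤)
    (hfg : analysisL1 Φ₁ f₁ + analysisL1 Φ₂ f₂ ≤ analysisL1 Φ₁ g₁ + analysisL1 Φ₂ g₂ + η) :
    analysisL1 Φ₁ (f₁ - g₁) + analysisL1 Φ₂ (f₂ - g₂) ≤
      2 * (analysisL1On Φ₁ S₁ (f₁ - g₁) + analysisL1On Φ₂ S₂ (f₂ - g₂)) +
        2 * (analysisL1On Φ₁ S₁ᶜ g₁ + analysisL1On Φ₂ S₂ᶜ g₂) + η := by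
  let pairL1On (T₁ : Set I₁) (T₂ : Set I₂) (x : H × H) : ℝ≥0∞ :=
    analysisL1On Φ₁ T₁ x.1 + analysisL1On Φ₂ T₂ x.2
  have hsub (T₁ : Set I₁) (T₂ : Set I₂) (x y : H × H) :
      pairL1On T₁ T₂ (x - y) ≤ pairL1On T₁ T₂ x + pairL1On T₁ T₂ y :=
    (add_le_add (analysisL1On_sub_le Φ₁ T₁ x.1 y.1) (analysisL1On_sub_le Φ₂ T₂ x.2 y.2)).trans_eq
      (add_add_add_comm _ _ _ _)
  have hsplit (x : H × H) :
      pairL1On S₁ S₂ x + pairL1On S₁ᶜ S₂ᶜ x = analysisL1 Φ₁ x.1 + analysisL1 Φ₂ x.2 := by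
    rw [add_add_add_comm, analysisL1On_add_compl, analysisL1On_add_compl]
  have := add_le_two_mul_add_of_le_add (hsub S₁ S₂) (hsub S₁ᶜ S₂ᶜ) (f := (f₁, f₂)) (g := (g₁, g₂))
    hg (by rwa [hsplit, hsplit])
  rwa [hsplit] at this

/-- Joint concentration is applied to the single vector `h₁ - n = -h₂`. -/
theorem analysisL1On_add_le_of_add_eq {h₁ h₂ n : H} (hn : h₁ + h₂ = n)
    (hfin : analysisL1 Φ₁ h₁ + analysisL1 Φ₂ h₂ ≠ ⊤) (hn_fin : analysisL1 Φ₁ n ≠ ⊤) :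
    analysisL1On Φ₁ S₁ h₁ + analysisL1On Φ₂ S₂ h₂ ≤
      jointConcentration Φ₁ Φ₂ S₁ S₂ * (analysisL1 Φ₁ h₁ + analysisL1 Φ₂ h₂) +
        2 * analysisL1 Φ₁ n := by
  set κ := jointConcentration Φ₁ Φ₂ S₁ S₂
  obtain ⟨h, rfl⟩ : ∃ h, h₁ = h + n := ⟨h₁ - n, (sub_add_cancel h₁ n).symm⟩
  obtain rfl : h₂ = -h := eq_neg_of_add_eq_zero_right (by rwa [add_right_comm, add_eq_right] at hn)
  have hh : analysisL1 Φ₁ h + analysisL1 Φ₂ h ≤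
      analysisL1 Φ₁ (h + n) + analysisL1 Φ₂ (-h) + analysisL1 Φ₁ n := by
    rw [analysisL1_neg, add_right_comm]
    gcongr
    simpa using analysisL1_sub_le Φ₁ (h + n) n
  calc analysisL1On Φ₁ S₁ (h + n) + analysisL1On Φ₂ S₂ (-h)
      ≤ analysisL1On Φ₁ S₁ h + analysisL1On Φ₁ S₁ n + analysisL1On Φ₂ S₂ h := by
        rw [analysisL1On_neg]; gcongr; exact analysisL1On_add_le Φ₁ S₁ h n
    _ ≤ analysisL1On Φ₁ S₁ h + analysisL1On Φ₂ S₂ h + analysisL1 Φ₁ n := by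
        rw [add_right_comm]; gcongr; exact analysisL1On_le Φ₁ S₁ n
    _ ≤ κ * (analysisL1 Φ₁ h + analysisL1 Φ₂ h) + analysisL1 Φ₁ n := by
        gcongr
        exact analysisL1On_add_le_jointConcentration_mul Φ₁ Φ₂ S₁ S₂
          (ne_top_of_le_ne_top (by finiteness) hh)
    _ ≤ κ * (analysisL1 Φ₁ (h + n) + analysisL1 Φ₂ (-h) + analysisL1 Φ₁ n) +
          analysisL1 Φ₁ n := by
        gcongr
    _ ≤ κ * (analysisL1 Φ₁ (h + n) + analysisL1 Φ₂ (-h)) + 1 * analysisL1 Φ₁ n +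
          analysisL1 Φ₁ n := by
        rw [mul_add]; gcongr; exact jointConcentration_le_one Φ₁ Φ₂ S₁ S₂
    _ = κ * (analysisL1 Φ₁ (h + n) + analysisL1 Φ₂ (-h)) + 2 * analysisL1 Φ₁ n := by ring

end Separation

theorem ENNReal.toReal_le_div_of_le_mul_add {L a c : ℝ≥0∞} (hL : L ≠ ⊤) (hc : c ≠ ⊤)
    (ha : a < 1) (h : L ≤ a * L + c) : L.toReal ≤ c.toReal / (1 - a.toReal) := by
  have ha' : a.toReal < 1 := ENNReal.toReal_lt_of_lt_ofReal (by simpa using ha)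
  have hreal : L.toReal ≤ a.toReal * L.toReal + c.toReal := by
    have := ENNReal.toReal_mono (by finiteness) h
    rwa [ENNReal.toReal_add (by finiteness) hc, ENNReal.toReal_mul] at this
  rw [le_div_iff₀ (by linarith)]
  linarith

theorem separation_l1_minimization_noisy_left {I₁ I₂ : Type*} (Φ₁ : I₁ → H) (Φ₂ : I₂ → H)
    (hΦ₁ : IsParsevalFrame Φ₁) (hΦ₂ : IsParsevalFrame Φ₂)
    (S₁ : Set I₁) (S₂ : Set I₂) {δ ε : ℝ} (hδ : 0 ≤ δ) (hε : 0 ≤ ε)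
    (hκ : jointConcentration Φ₁ Φ₂ S₁ S₂ < 1 / 2) {S₁0 S₂0 n S₁s S₂s : H}
    (hfin : analysisL1 Φ₁ S₁0 + analysisL1 Φ₂ S₂0 < ⊤)
    (hsparse : analysisL1On Φ₁ S₁ᶜ S₁0 + analysisL1On Φ₂ S₂ᶜ S₂0 ≤ ENNReal.ofReal δ)
    (hnoise : analysisL1 Φ₁ n ≤ ENNReal.ofReal ε) (hsum : S₁s + S₂s = S₁0 + S₂0 + n)
    (hmin : analysisL1 Φ₁ S₁s + analysisL1 Φ₂ S₂s ≤ analysisL1 Φ₁ (S₁0 + n) + analysisL1 Φ₂ S₂0) :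
    ‖S₁s - S₁0‖ + ‖S₂s - S₂0‖ ≤
      (2 * δ + 5 * ε) / (1 - 2 * (jointConcentration Φ₁ Φ₂ S₁ S₂).toReal) := by
  set κ := jointConcentration Φ₁ Φ₂ S₁ S₂
  set L := analysisL1 Φ₁ (S₁s - S₁0) + analysisL1 Φ₂ (S₂s - S₂0)
  have hcost : analysisL1 Φ₁ S₁s + analysisL1 Φ₂ S₂s ≤
      analysisL1 Φ₁ S₁0 + analysisL1 Φ₂ S₂0 + ENNReal.ofReal ε := by
    refine hmin.trans ?_
    rw [add_right_comm]
    gcongr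
    exact (analysisL1_add_le Φ₁ S₁0 n).trans (by gcongr)
  have hL : L ≠ ⊤ := by
    have hfin' := hfin.ne
    have hs_fin := ne_top_of_le_ne_top (by finiteness) hcost
    exact ne_top_of_le_ne_top (by finiteness) ((add_le_add (analysisL1_sub_le Φ₁ S₁s S₁0)
      (analysisL1_sub_le Φ₂ S₂s S₂0)).trans_eq (add_add_add_comm _ _ _ _))
  have hcone := analysisL1_sub_add_le_of_le_add Φ₁ Φ₂ S₁ S₂
    (ne_top_of_le_ne_top hfin.ne (analysisL1On_add_le_analysisL1_add Φ₁ Φ₂ S₁ S₂ _ _)) hcost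
  have hon := analysisL1On_add_le_of_add_eq Φ₁ Φ₂ S₁ S₂ (h₁ := S₁s - S₁0) (h₂ := S₂s - S₂0)
    (by rw [sub_add_sub_comm, hsum]; abel) hL (ne_top_of_le_ne_top ENNReal.ofReal_ne_top hnoise)
  have hkey : L ≤ 2 * κ * L + ENNReal.ofReal (2 * δ + 5 * ε) := calc
    L ≤ 2 * (κ * L + 2 * ENNReal.ofReal ε) + 2 * ENNReal.ofReal δ + ENNReal.ofReal ε := by
      refine hcone.trans ?_
      gcongr 2 * ?_ + 2 * ?_ + _
      exact hon.trans (by gcongr)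
    _ = 2 * κ * L + ENNReal.ofReal (2 * δ + 5 * ε) := by
      rw [ENNReal.ofReal_add (by positivity) (by positivity), ENNReal.ofReal_mul zero_le_two,
        ENNReal.ofReal_mul (by norm_num)]
      simp only [ENNReal.ofReal_ofNat]
      ring
  have hnorm : ‖S₁s - S₁0‖ + ‖S₂s - S₂0‖ ≤ L.toReal := by
    have h₁ := hΦ₁.ofReal_norm_le_analysisL1 (S₁s - S₁0)
    have h₂ := hΦ₂.ofReal_norm_le_analysisL1 (S₂s - S₂0)
    obtain ⟨hL₁, hL₂⟩ := ENNReal.add_ne_top.1 hL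
    rw [ENNReal.toReal_add hL₁ hL₂]
    exact add_le_add ((ENNReal.ofReal_le_iff_le_toReal hL₁).1 h₁)
      ((ENNReal.ofReal_le_iff_le_toReal hL₂).1 h₂)
  calc ‖S₁s - S₁0‖ + ‖S₂s - S₂0‖ ≤ L.toReal := hnorm
    _ ≤ (ENNReal.ofReal (2 * δ + 5 * ε)).toReal / (1 - (2 * κ).toReal) :=
      ENNReal.toReal_le_div_of_le_mul_add hL ENNReal.ofReal_ne_top
        (ENNReal.mul_lt_of_lt_div' hκ) hkey
    _ = (2 * δ + 5 * ε) / (1 - 2 * κ.toReal) := by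
      rw [ENNReal.toReal_ofReal (by positivity), ENNReal.toReal_mul, ENNReal.toReal_ofNat]

theorem separation_l1_minimization_noisy_general
    {I₁ I₂ : Type*}
    (Φ₁ : I₁ → H) (Φ₂ : I₂ → H)
    (hΦ₁ : IsParsevalFrame Φ₁) (hΦ₂ : IsParsevalFrame Φ₂)
    (S₁ : Set I₁) (S₂ : Set I₂) (δ ε : ℝ) (hδ : 0 ≤ δ) (hε : 0 ≤ ε)
    (hκ : jointConcentration Φ₁ Φ₂ S₁ S₂ < 1 / 2)
    (St S₁0 S₂0 n : H) (hSt : St = S₁0 + S₂0 + n)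
    (hfin : analysisL1 Φ₁ S₁0 + analysisL1 Φ₂ S₂0 < ⊤)
    (hsparse : analysisL1On Φ₁ S₁ᶜ S₁0 + analysisL1On Φ₂ S₂ᶜ S₂0 ≤ ENNReal.ofReal δ)
    (hnoise : analysisL1 Φ₁ n ≤ ENNReal.ofReal ε ∨ analysisL1 Φ₂ n ≤ ENNReal.ofReal ε)
    (S₁s S₂s : H) (hsum : S₁s + S₂s = St)
    (hmin : ∀ T₁ T₂ : H, T₁ + T₂ = St →
      analysisL1 Φ₁ S₁s + analysisL1 Φ₂ S₂s ≤ analysisL1 Φ₁ T₁ + analysisL1 Φ₂ T₂) :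
    ‖S₁s - S₁0‖ + ‖S₂s - S₂0‖ ≤
      (2 * δ + 5 * ε) / (1 - 2 * (jointConcentration Φ₁ Φ₂ S₁ S₂).toReal) := by
  subst hSt
  rcases hnoise with hnoise | hnoise
  · exact separation_l1_minimization_noisy_left Φ₁ Φ₂ hΦ₁ hΦ₂ S₁ S₂ hδ hε hκ hfin hsparse hnoise
      hsum (hmin _ _ (by abel))
  · rw [jointConcentration_comm] at hκ ⊢
    rw [add_comm] at hfin hsparse ⊢
    refine separation_l1_minimization_noisy_left Φ₂ Φ₁ hΦ₂ hΦ₁ S₂ S₁ hδ hε hκ hfin hsparse hnoise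
      (by rw [add_comm, hsum]; abel) ?_
    rw [add_comm, add_comm (analysisL1 Φ₂ _)]
    exact hmin _ _ (by abel)

/-- Noise-robust version of the separation estimate, cf. (8.1) in the paper. -/
theorem separation_l1_minimization_noisy
    [CompleteSpace H] [SecondCountableTopology H]
    {I₁ I₂ : Type*} [Countable I₁] [Countable I₂]
    (Φ₁ : I₁ → H) (Φ₂ : I₂ → H)
    (hΦ₁ : IsParsevalFrame Φ₁) (hΦ₂ : IsParsevalFrame Φ₂)
    (S₁ : Set I₁) (S₂ : Set I₂) (δ ε : ℝ) (hδ : 0 ≤ δ) (hε : 0 ≤ ε)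
    (hκ : jointConcentration Φ₁ Φ₂ S₁ S₂ < 1 / 2)
    (St S₁0 S₂0 n : H) (hSt : St = S₁0 + S₂0 + n)
    (hfin : analysisL1 Φ₁ S₁0 + analysisL1 Φ₂ S₂0 < ⊤)
    (hsparse : analysisL1On Φ₁ S₁ᶜ S₁0 + analysisL1On Φ₂ S₂ᶜ S₂0 ≤ ENNReal.ofReal δ)
    (hnoise : analysisL1 Φ₁ n ≤ ENNReal.ofReal ε ∨ analysisL1 Φ₂ n ≤ ENNReal.ofReal ε)
    (S₁s S₂s : H) (hsum : S₁s + S₂s = St)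
    (hmin : ∀ T₁ T₂ : H, T₁ + T₂ = St →
      analysisL1 Φ₁ S₁s + analysisL1 Φ₂ S₂s ≤ analysisL1 Φ₁ T₁ + analysisL1 Φ₂ T₂) :
    ‖S₁s - S₁0‖ + ‖S₂s - S₂0‖ ≤
      (2 * δ + 5 * ε) / (1 - 2 * (jointConcentration Φ₁ Φ₂ S₁ S₂).toReal) :=
  separation_l1_minimization_noisy_general Φ₁ Φ₂ hΦ₁ hΦ₂ S₁ S₂ δ ε hδ hε hκ St S₁0 S₂0 n hSt hfin
    hsparse hnoise S₁s S₂s hsum hmin
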